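/- arXiv:1712.09033 — 9 statements merged into one kernel-verified Lean document; each statement's English description precedes it below -/
import Mathlib

section
/- Let w1, w2, w3 be differentiable functions satisfying the generalized Darboux–Halphen system w1' = -w2w3 + w1(w2+w3) + τ², w2' = -w3w1 + w2(w3+w1) + τ², w3' = -w1w2 + w3(w1+w2) + τ², with τ² = 0 (i.e., α = β = γ = 0). Then y := 2(w1 + w2 + w3) satisfies the Chazy III equation y''' - 2yy'' + 3(y')^2 = 0. -/
/-! In terms of the elementary symmetric functions `s₁ = w₁ + w₂ + w₃`, `s₂ = w₁w₂ + w₂w₃ + w₃w₁`,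
`s₃ = w₁w₂w₃`, the Darboux–Halphen system closes up: `s₁' = s₂`, `s₂' = 6 s₃` and
`s₃' = 4 s₁ s₃ - s₂²`. Hence `y = 2 s₁` has `y' = 2 s₂`, `y'' = 12 s₃`, `y''' = 12 (4 s₁ s₃ - s₂²)`,
and the Chazy III equation becomes a polynomial identity in `s₁, s₂, s₃`. -/

variable {𝕜 : Type*} [NontriviallyNormedField 𝕜]

structure IsDarbouxHalphen (w1 w2 w3 : 𝕜 → 𝕜) : Prop where
  hasDerivAt₁ : ∀ z, HasDerivAt w1 (-(w2 z * w3 z) + w1 z * (w2 z + w3 z)) z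
  hasDerivAt₂ : ∀ z, HasDerivAt w2 (-(w3 z * w1 z) + w2 z * (w3 z + w1 z)) z
  hasDerivAt₃ : ∀ z, HasDerivAt w3 (-(w1 z * w2 z) + w3 z * (w1 z + w2 z)) z

namespace IsDarbouxHalphen

variable {w1 w2 w3 : 𝕜 → 𝕜} (h : IsDarbouxHalphen w1 w2 w3) (z : 𝕜)
include h

theorem hasDerivAt_sum :
    HasDerivAt (fun t => w1 t + w2 t + w3 t) (w1 z * w2 z + w2 z * w3 z + w3 z * w1 z) z :=
  ((h.hasDerivAt₁ z).fun_add (h.hasDerivAt₂ z)).fun_add (h.hasDerivAt₃ z) |>.congr_deriv (by ring)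

theorem hasDerivAt_sum_pairwise_mul :
    HasDerivAt (fun t => w1 t * w2 t + w2 t * w3 t + w3 t * w1 t) (6 * (w1 z * w2 z * w3 z)) z := by
  have h₁ := h.hasDerivAt₁ z
  have h₂ := h.hasDerivAt₂ z
  have h₃ := h.hasDerivAt₃ z
  exact ((h₁.fun_mul h₂).fun_add (h₂.fun_mul h₃)).fun_add (h₃.fun_mul h₁) |>.congr_deriv (by ring)

theorem hasDerivAt_prod :
    HasDerivAt (fun t => w1 t * w2 t * w3 t)
      (4 * (w1 z + w2 z + w3 z) * (w1 z * w2 z * w3 z)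
        - (w1 z * w2 z + w2 z * w3 z + w3 z * w1 z) ^ 2) z :=
  ((h.hasDerivAt₁ z).fun_mul (h.hasDerivAt₂ z)).fun_mul (h.hasDerivAt₃ z) |>.congr_deriv (by ring)

theorem deriv_two_mul_sum :
    deriv (fun t => 2 * (w1 t + w2 t + w3 t))
      = fun z => 2 * (w1 z * w2 z + w2 z * w3 z + w3 z * w1 z) :=
  funext fun z => ((h.hasDerivAt_sum z).const_mul 2).deriv

theorem iterate_two_deriv_two_mul_sum :
    deriv^[2] (fun t => 2 * (w1 t + w2 t + w3 t)) = fun z => 12 * (w1 z * w2 z * w3 z) := by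
  rw [Function.iterate_succ_apply', Function.iterate_one, h.deriv_two_mul_sum]
  funext z
  rw [((h.hasDerivAt_sum_pairwise_mul z).const_mul 2).deriv]
  ring

theorem iterate_three_deriv_two_mul_sum :
    deriv^[3] (fun t => 2 * (w1 t + w2 t + w3 t))
      = fun z => 12 * (4 * (w1 z + w2 z + w3 z) * (w1 z * w2 z * w3 z)
        - (w1 z * w2 z + w2 z * w3 z + w3 z * w1 z) ^ 2) := by
  rw [Function.iterate_succ_apply', h.iterate_two_deriv_two_mul_sum]
  exact funext fun z => ((h.hasDerivAt_prod z).const_mul 12).deriv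

end IsDarbouxHalphen

theorem darboux_halphen_to_chazyIII (w1 w2 w3 : ℂ → ℂ)
    (h1 : ContDiff ℂ ⊤ w1) (h2 : ContDiff ℂ ⊤ w2) (h3 : ContDiff ℂ ⊤ w3)
    (hw1 : ∀ z, deriv w1 z = -(w2 z * w3 z) + w1 z * (w2 z + w3 z))
    (hw2 : ∀ z, deriv w2 z = -(w3 z * w1 z) + w2 z * (w3 z + w1 z))
    (hw3 : ∀ z, deriv w3 z = -(w1 z * w2 z) + w3 z * (w1 z + w2 z)) :
    ∀ z, deriv^[3] (fun t => 2 * (w1 t + w2 t + w3 t)) z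
      - 2 * (2 * (w1 z + w2 z + w3 z)) * deriv^[2] (fun t => 2 * (w1 t + w2 t + w3 t)) z
      + 3 * (deriv (fun t => 2 * (w1 t + w2 t + w3 t)) z) ^ 2 = 0 := by
  have hasDerivAt {w : ℂ → ℂ} (hw : ContDiff ℂ ⊤ w) (z : ℂ) : HasDerivAt w (deriv w z) z :=
    (hw.differentiable (by simp) z).hasDerivAt
  have h : IsDarbouxHalphen w1 w2 w3 :=
    ⟨fun z => hw1 z ▸ hasDerivAt h1 z, fun z => hw2 z ▸ hasDerivAt h2 z,
      fun z => hw3 z ▸ hasDerivAt h3 z⟩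
  intro z
  rw [h.iterate_three_deriv_two_mul_sum, h.iterate_two_deriv_two_mul_sum, h.deriv_two_mul_sum]
  ring
end

section
/- Define V2(s) = (1/2)[A/s² + B/(s-1)² + C/(s(s-1))] with A = α1² - α², B = β1² - β², C = γ1² - A - B - γ², and η(s) = -(1-α1)/s - (1-β1)/(s-1). Define recursively V_{n+1}(s) = V_n'(s) - n·η(s)·V_n(s). Then the identity V4(s) = J·V2(s)² holds for all s ∉ {0,1} if and only if the five polynomial conditions hold: (i) JB² = 12Bβ1², (ii) 2JBC = 4[(1-α1)(1-6β1)B + (1/2)(1-2β1)(1-3β1)C], (iii) J(2AB + C²) = 4[(2-3β1)(1-β1)A + (2-3α1)(1-α1)B + (1/2)((2-3β1)(1-2α1)+(2-3α1)(1-2β1))C], (iv) 2JAC = 4[(1-β1)(1-6α1)A + (1/2)(1-2α1)(1-3α1)C], (v) JA² = 12Aα1². -/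
theorem glue1_aux (p q r u v : ℂ) :
    p / (2 * u ^ 3 * v ^ 3) - 2 * (q / (u * v)) * (r / (2 * u ^ 2 * v ^ 2))
      = (p - 2 * q * r) / (2 * u ^ 3 * v ^ 3) := by
  rw [← mul_div_assoc, ← mul_div_assoc, div_mul_eq_mul_div, div_div,
    show (u * v) * (2 * u ^ 2 * v ^ 2) = 2 * u ^ 3 * v ^ 3 from by ring, div_sub_div_same]

theorem glue2_aux (J p q r s u v : ℂ) (hu : u ≠ 0) (hv : v ≠ 0) :
    (p / (2 * u ^ 4 * v ^ 4) - 3 * (q / (u * v)) * (r / (2 * u ^ 3 * v ^ 3))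
        - J * (s / (2 * u ^ 2 * v ^ 2)) ^ 2) * (4 * u ^ 4 * v ^ 4)
      = 2 * p - 6 * q * r - J * s ^ 2 := by
  have h2 : (2 : ℂ) * u ^ 4 * v ^ 4 ≠ 0 :=
    mul_ne_zero (mul_ne_zero two_ne_zero (pow_ne_zero _ hu)) (pow_ne_zero _ hv)
  have h4 : (4 : ℂ) * u ^ 4 * v ^ 4 ≠ 0 :=
    mul_ne_zero (mul_ne_zero (by norm_num : (4:ℂ) ≠ 0) (pow_ne_zero _ hu)) (pow_ne_zero _ hv)
  rw [div_pow, ← mul_div_assoc, ← mul_div_assoc, ← mul_div_assoc, div_mul_eq_mul_div, div_div,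
    show (u * v) * (2 * u ^ 3 * v ^ 3) = 2 * u ^ 4 * v ^ 4 from by ring,
    show (2 * u ^ 2 * v ^ 2) ^ 2 = 4 * u ^ 4 * v ^ 4 from by ring,
    div_sub_div_same, div_sub_div _ _ h2 h4, div_mul_eq_mul_div, div_eq_iff (mul_ne_zero h2 h4)]
  ring


set_option maxHeartbeats 1600000 in
theorem V4_eq_JV2sq_iff (α β γ α1 β1 γ1 J A B C : ℂ)
    (hγ1 : γ1 = 1 - α1 - β1)
    (hA : A = α1 ^ 2 - α ^ 2) (hB : B = β1 ^ 2 - β ^ 2)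
    (hC : C = γ1 ^ 2 - A - B - γ ^ 2)
    (V2 η V3 V4 : ℂ → ℂ)
    (hV2 : ∀ x, V2 x = (1/2) * (A / x ^ 2 + B / (x - 1) ^ 2 + C / (x * (x - 1))))
    (hη : ∀ x, η x = -((1 - α1) / x) - (1 - β1) / (x - 1))
    (hV3 : ∀ x, V3 x = deriv V2 x - 2 * η x * V2 x)
    (hV4 : ∀ x, V4 x = deriv V3 x - 3 * η x * V3 x) :
    (∀ x : ℂ, x ≠ 0 → x ≠ 1 → V4 x = J * (V2 x) ^ 2) ↔
    (J * B ^ 2 = 12 * B * β1 ^ 2 ∧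
     2 * J * B * C = 4 * ((1 - α1) * (1 - 6 * β1) * B
        + (1/2) * (1 - 2 * β1) * (1 - 3 * β1) * C) ∧
     J * (2 * A * B + C ^ 2) = 4 * ((2 - 3 * β1) * (1 - β1) * A
        + (2 - 3 * α1) * (1 - α1) * B
        + (1/2) * ((2 - 3 * β1) * (1 - 2 * α1) + (2 - 3 * α1) * (1 - 2 * β1)) * C) ∧
     2 * J * A * C = 4 * ((1 - β1) * (1 - 6 * α1) * A
        + (1/2) * (1 - 2 * α1) * (1 - 3 * α1) * C) ∧
     J * A ^ 2 = 12 * A * α1 ^ 2) := by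
  have hV2fun : V2 = fun x => (1/2) * (A / x ^ 2 + B / (x - 1) ^ 2 + C / (x * (x - 1))) :=
    funext hV2
  have hV2' : ∀ x : ℂ, x ≠ 0 → x ≠ 1 →
      V2 x = (((1)*A) + ((-1)*C + (-2)*A) * x + ((1)*C + (1)*B + (1)*A) * x ^ 2) / (2 * x ^ 2 * (x - 1) ^ 2) := by
    intro x hx0 hx1
    have hx1' : x - 1 ≠ 0 := sub_ne_zero.mpr hx1
    rw [hV2 x]
    field_simp [hx0, hx1']
    ring
  have hη' : ∀ x : ℂ, x ≠ 0 → x ≠ 1 →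
      η x = ((α1 - 1) * (x - 1) + (β1 - 1) * x) / (x * (x - 1)) := by
    intro x hx0 hx1
    have hx1' : x - 1 ≠ 0 := sub_ne_zero.mpr hx1
    rw [hη x]
    field_simp [hx0, hx1']
    ring
  have hderiv2 : ∀ x : ℂ, x ≠ 0 → x ≠ 1 →
      deriv V2 x = (((2)*A) + ((-1)*C + (-6)*A) * x + ((3)*C + (6)*A) * x ^ 2 + ((-2)*C + (-2)*B + (-2)*A) * x ^ 3) / (2 * x ^ 3 * (x - 1) ^ 3) := by
    intro x hx0 hx1
    have hx1' : x - 1 ≠ 0 := sub_ne_zero.mpr hx1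
    have h := ((((hasDerivAt_const x A).div (hasDerivAt_pow 2 x) (pow_ne_zero 2 hx0)).add
        ((hasDerivAt_const x B).div (((hasDerivAt_id' x).sub_const 1).pow 2) (pow_ne_zero 2 hx1'))).add
        ((hasDerivAt_const x C).div ((hasDerivAt_id' x).mul ((hasDerivAt_id' x).sub_const 1))
          (mul_ne_zero hx0 hx1'))).const_mul ((1:ℂ)/2)
    have h' := h.deriv
    simp only [Pi.div_apply, Pi.add_apply, Pi.mul_apply, Pi.pow_apply] at h'
    rw [hV2fun, h']
    field_simp [hx0, hx1']
    ring
  have hW3 : ∀ x : ℂ, x ≠ 0 → x ≠ 1 →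
      V3 x = (((2)*A*α1) + ((1)*C + (-2)*C*α1 + (2)*A + (-2)*A*β1 + (-6)*A*α1) * x + ((-3)*C + (2)*C*β1 + (4)*C*α1 + (-2)*B + (2)*B*α1 + (-4)*A + (4)*A*β1 + (6)*A*α1) * x ^ 2 + ((2)*C + (-2)*C*β1 + (-2)*C*α1 + (2)*B + (-2)*B*β1 + (-2)*B*α1 + (2)*A + (-2)*A*β1 + (-2)*A*α1) * x ^ 3) / (2 * x ^ 3 * (x - 1) ^ 3) := by
    intro x hx0 hx1
    have hx1' : x - 1 ≠ 0 := sub_ne_zero.mpr hx1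
    have hd : (2:ℂ) * x ^ 3 * (x - 1) ^ 3 ≠ 0 :=
      mul_ne_zero (mul_ne_zero two_ne_zero (pow_ne_zero _ hx0)) (pow_ne_zero _ hx1')
    rw [hV3 x, hderiv2 x hx0 hx1, hη' x hx0 hx1, hV2' x hx0 hx1, glue1_aux,
      div_eq_div_iff hd hd]
    ring
  have hderiv3 : ∀ x : ℂ, x ≠ 0 → x ≠ 1 →
      deriv V3 x = (((6)*A*α1) + ((2)*C + (-4)*C*α1 + (4)*A + (-4)*A*β1 + (-24)*A*α1) * x + ((-8)*C + (2)*C*β1 + (14)*C*α1 + (-2)*B + (2)*B*α1 + (-14)*A + (14)*A*β1 + (36)*A*α1) * x ^ 2 + ((12)*C + (-8)*C*β1 + (-16)*C*α1 + (8)*B + (-8)*B*α1 + (16)*A + (-16)*A*β1 + (-24)*A*α1) * x ^ 3 + ((-6)*C + (6)*C*β1 + (6)*C*α1 + (-6)*B + (6)*B*β1 + (6)*B*α1 + (-6)*A + (6)*A*β1 + (6)*A*α1) * x ^ 4) / (2 * x ^ 4 * (x - 1) ^ 4) := by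
    intro x hx0 hx1
    have hx1' : x - 1 ≠ 0 := sub_ne_zero.mpr hx1
    have hev : V3 =ᶠ[nhds x]
        (fun y => (((2)*A*α1) + ((1)*C + (-2)*C*α1 + (2)*A + (-2)*A*β1 + (-6)*A*α1) * y + ((-3)*C + (2)*C*β1 + (4)*C*α1 + (-2)*B + (2)*B*α1 + (-4)*A + (4)*A*β1 + (6)*A*α1) * y ^ 2 + ((2)*C + (-2)*C*β1 + (-2)*C*α1 + (2)*B + (-2)*B*β1 + (-2)*B*α1 + (2)*A + (-2)*A*β1 + (-2)*A*α1) * y ^ 3) / (2 * y ^ 3 * (y - 1) ^ 3)) := by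
      filter_upwards [eventually_ne_nhds hx0, eventually_ne_nhds hx1] with y hy0 hy1
      exact hW3 y hy0 hy1
    rw [hev.deriv_eq]
    have hnum : HasDerivAt (fun y : ℂ => ((2)*A*α1) + ((1)*C + (-2)*C*α1 + (2)*A + (-2)*A*β1 + (-6)*A*α1) * y + ((-3)*C + (2)*C*β1 + (4)*C*α1 + (-2)*B + (2)*B*α1 + (-4)*A + (4)*A*β1 + (6)*A*α1) * y ^ 2 + ((2)*C + (-2)*C*β1 + (-2)*C*α1 + (2)*B + (-2)*B*β1 + (-2)*B*α1 + (2)*A + (-2)*A*β1 + (-2)*A*α1) * y ^ 3)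
        ((0:ℂ) + ((1)*C + (-2)*C*α1 + (2)*A + (-2)*A*β1 + (-6)*A*α1) * 1 + ((-3)*C + (2)*C*β1 + (4)*C*α1 + (-2)*B + (2)*B*α1 + (-4)*A + (4)*A*β1 + (6)*A*α1) * ((2:ℕ) * x ^ (2-1)) + ((2)*C + (-2)*C*β1 + (-2)*C*α1 + (2)*B + (-2)*B*β1 + (-2)*B*α1 + (2)*A + (-2)*A*β1 + (-2)*A*α1) * ((3:ℕ) * x ^ (3-1))) x :=
      (((hasDerivAt_const x _).add ((hasDerivAt_id' x).const_mul _)).add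
        ((hasDerivAt_pow 2 x).const_mul _)).add ((hasDerivAt_pow 3 x).const_mul _)
    have hden : HasDerivAt (fun y : ℂ => 2 * y ^ 3 * (y - 1) ^ 3)
        ((2 * ((3:ℕ) * x ^ (3-1))) * (x - 1) ^ 3 + 2 * x ^ 3 * ((3:ℕ) * (x - 1) ^ (3-1) * 1)) x :=
      (((hasDerivAt_pow 3 x).const_mul 2).mul (((hasDerivAt_id' x).sub_const 1).pow 3))
    have hd : (2:ℂ) * x ^ 3 * (x - 1) ^ 3 ≠ 0 :=
      mul_ne_zero (mul_ne_zero two_ne_zero (pow_ne_zero _ hx0)) (pow_ne_zero _ hx1')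
    have hd4 : (2:ℂ) * x ^ 4 * (x - 1) ^ 4 ≠ 0 :=
      mul_ne_zero (mul_ne_zero two_ne_zero (pow_ne_zero _ hx0)) (pow_ne_zero _ hx1')
    have h := hnum.div hden hd
    have h' := h.deriv
    simp only [Pi.div_def] at h'
    rw [h', div_eq_div_iff (pow_ne_zero 2 hd) hd4]
    ring
  have master : ∀ x : ℂ, x ≠ 0 → x ≠ 1 →
      (V4 x - J * (V2 x) ^ 2) * (4 * x ^ 4 * (x - 1) ^ 4)
        = ((12)*A*α1^2 + (-1)*A^2*J) + ((-2)*C + (10)*C*α1 + (-12)*C*α1^2 + (-4)*A + (4)*A*β1 + (24)*A*α1 + (-24)*A*α1*β1 + (-48)*A*α1^2 + (2)*A*C*J + (4)*A^2*J) * x + ((14)*C + (-14)*C*β1 + (-44)*C*α1 + (24)*C*α1*β1 + (36)*C*α1^2 + (-1)*C^2*J + (8)*B + (-20)*B*α1 + (12)*B*α1^2 + (20)*A + (-32)*A*β1 + (12)*A*β1^2 + (-72)*A*α1 + (72)*A*α1*β1 + (72)*A*α1^2 + (-6)*A*C*J + (-2)*A*B*J + (-6)*A^2*J) * x ^ 2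 + ((-24)*C + (38)*C*β1 + (-12)*C*β1^2 + (58)*C*α1 + (-48)*C*α1*β1 + (-36)*C*α1^2 + (2)*C^2*J + (-20)*B + (24)*B*β1 + (44)*B*α1 + (-24)*B*α1*β1 + (-24)*B*α1^2 + (2)*B*C*J + (-28)*A + (52)*A*β1 + (-24)*A*β1^2 + (72)*A*α1 + (-72)*A*α1*β1 + (-48)*A*α1^2 + (6)*A*C*J + (4)*A*B*J + (4)*A^2*J) * x ^ 3 + ((12)*C + (-24)*C*β1 + (12)*C*β1^2 + (-24)*C*α1 + (24)*C*α1*β1 + (12)*C*α1^2 + (-1)*C^2*J + (12)*B + (-24)*B*β1 + (12)*B*β1^2 + (-24)*B*α1 + (24)*B*α1*β1 + (12)*B*α1^2 + (-2)*B*C*J + (-1)*B^2*J + (12)*A + (-24)*A*β1 + (12)*A*β1^2 + (-24)*A*α1 + (24)*A*α1*β1 + (12)*A*α1^2 + (-2)*A*C*J + (-2)*A*B*J + (-1)*A^2*J) * x ^ 4 := by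
    intro x hx0 hx1
    have hx1' : x - 1 ≠ 0 := sub_ne_zero.mpr hx1
    rw [hV4 x, hderiv3 x hx0 hx1, hη' x hx0 hx1, hW3 x hx0 hx1, hV2' x hx0 hx1,
      glue2_aux _ _ _ _ _ _ _ hx0 hx1']
    ring
  constructor
  · intro h
    have key : ∀ x : ℂ, x ≠ 0 → x ≠ 1 →
        (((12)*A*α1^2 + (-1)*A^2*J) + ((-2)*C + (10)*C*α1 + (-12)*C*α1^2 + (-4)*A + (4)*A*β1 + (24)*A*α1 + (-24)*A*α1*β1 + (-48)*A*α1^2 + (2)*A*C*J + (4)*A^2*J) * x + ((14)*C + (-14)*C*β1 + (-44)*C*α1 + (24)*C*α1*β1 + (36)*C*α1^2 + (-1)*C^2*J + (8)*B + (-20)*B*α1 + (12)*B*α1^2 + (20)*A + (-32)*A*β1 + (12)*A*β1^2 + (-72)*A*α1 + (72)*A*α1*β1 + (72)*A*α1^2 + (-6)*A*C*J + (-2)*A*B*J + (-6)*A^2*J) * x ^ 2 + ((-24)*C + (38)*C*β1 + (-12)*C*β1^2 + (58)*C*α1 + (-48)*C*α1*β1 + (-36)*C*α1^2 + (2)*C^2*J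 + (-20)*B + (24)*B*β1 + (44)*B*α1 + (-24)*B*α1*β1 + (-24)*B*α1^2 + (2)*B*C*J + (-28)*A + (52)*A*β1 + (-24)*A*β1^2 + (72)*A*α1 + (-72)*A*α1*β1 + (-48)*A*α1^2 + (6)*A*C*J + (4)*A*B*J + (4)*A^2*J) * x ^ 3 + ((12)*C + (-24)*C*β1 + (12)*C*β1^2 + (-24)*C*α1 + (24)*C*α1*β1 + (12)*C*α1^2 + (-1)*C^2*J + (12)*B + (-24)*B*β1 + (12)*B*β1^2 + (-24)*B*α1 + (24)*B*α1*β1 + (12)*B*α1^2 + (-2)*B*C*J + (-1)*B^2*J + (12)*A + (-24)*A*β1 + (12)*A*β1^2 + (-24)*A*α1 + (24)*A*α1*β1 + (12)*A*α1^2 + (-2)*A*C*J + (-2)*A*B*J + (-1)*A^2*J) * x ^ 4) = (0:ℂ) := by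
      intro x hx0 hx1
      rw [← master x hx0 hx1, h x hx0 hx1]
      ring
    have k2 := key 2 (by norm_num) (by norm_num)
    have k3 := key 3 (by norm_num) (by norm_num)
    have k4 := key 4 (by norm_num) (by norm_num)
    have k5 := key 5 (by norm_num) (by norm_num)
    have k6 := key 6 (by norm_num) (by norm_num)
    refine ⟨?_, ?_, ?_, ?_, ?_⟩
    · linear_combination (-5:ℂ) * k2 + 10 * k3 + (-10) * k4 + 5 * k5 + (-1) * k6
    · linear_combination (317/12:ℂ) * k2 + (-347/6) * k3 + (119/2) * k4 + (-181/6) * k5 + (73/12) * k6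
    · linear_combination (-1253/24:ℂ) * k2 + (370/3) * k3 + (-523/4) * k4 + (202/3) * k5 + (-329/24) * k6
    · linear_combination (183/4:ℂ) * k2 + (-346/3) * k3 + (126:ℂ) * k4 + (-66:ℂ) * k5 + (163/12) * k6
    · linear_combination (-15:ℂ) * k2 + 40 * k3 + (-45) * k4 + 24 * k5 + (-5) * k6
  · rintro ⟨h1, h2, h3, h4, h5⟩ x hx0 hx1
    have hx1' : x - 1 ≠ 0 := sub_ne_zero.mpr hx1
    have hm := master x hx0 hx1
    have hP : (((12)*A*α1^2 + (-1)*A^2*J) + ((-2)*C + (10)*C*α1 + (-12)*C*α1^2 + (-4)*A + (4)*A*β1 + (24)*A*α1 + (-24)*A*α1*β1 + (-48)*A*α1^2 + (2)*A*C*J + (4)*A^2*J) * x + ((14)*C + (-14)*C*β1 + (-44)*C*α1 + (24)*C*α1*β1 + (36)*C*α1^2 + (-1)*C^2*J + (8)*B + (-20)*B*α1 + (12)*B*α1^2 + (20)*A + (-32)*A*β1 + (12)*A*β1^2 + (-72)*A*α1 + (72)*A*α1*β1 + (72)*A*α1^2 + (-6)*A*C*J + (-2)*A*B*J + (-6)*A^2*J)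 * x ^ 2 + ((-24)*C + (38)*C*β1 + (-12)*C*β1^2 + (58)*C*α1 + (-48)*C*α1*β1 + (-36)*C*α1^2 + (2)*C^2*J + (-20)*B + (24)*B*β1 + (44)*B*α1 + (-24)*B*α1*β1 + (-24)*B*α1^2 + (2)*B*C*J + (-28)*A + (52)*A*β1 + (-24)*A*β1^2 + (72)*A*α1 + (-72)*A*α1*β1 + (-48)*A*α1^2 + (6)*A*C*J + (4)*A*B*J + (4)*A^2*J) * x ^ 3 + ((12)*C + (-24)*C*β1 + (12)*C*β1^2 + (-24)*C*α1 + (24)*C*α1*β1 + (12)*C*α1^2 + (-1)*C^2*J + (12)*B + (-24)*B*β1 + (12)*B*β1^2 + (-24)*B*α1 + (24)*B*α1*β1 + (12)*B*α1^2 + (-2)*B*C*J + (-1)*B^2*J + (12)*A + (-24)*A*β1 + (12)*A*β1^2 + (-24)*A*α1 + (24)*A*α1*β1 + (12)*A*α1^2 + (-2)*A*C*J + (-2)*A*B*J + (-1)*A^2*J) * x ^ 4) = (0:ℂ) := by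
      linear_combination (-(x:ℂ) ^ 4) * h1
        + ((x:ℂ) ^ 3 - x ^ 4) * h2
        + (-(x:ℂ) ^ 2 + 2 * x ^ 3 - x ^ 4) * h3
        + ((x:ℂ) - 3 * x ^ 2 + 3 * x ^ 3 - x ^ 4) * h4
        + ((-1:ℂ) + 4 * x - 6 * x ^ 2 + 4 * x ^ 3 - x ^ 4) * h5
    rw [hP] at hm
    rcases mul_eq_zero.mp hm with hz | hz
    · exact sub_eq_zero.mp hz
    · exact absurd hz (by
        exact mul_ne_zero (mul_ne_zero (by norm_num : (4:ℂ) ≠ 0) (pow_ne_zero 4 hx0)) (pow_ne_zero 4 hx1'))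
end

section
/- Suppose J = 0 and the five algebraic conditions u1 = ... = u5 = 0 from the Chazy XII parameter system hold (with A = α1²-α², B = β1²-β², C = γ1²-A-B-γ², γ1 = 1-α1-β1). Then there is no solution with α, β, γ each equal to 0 or a reciprocal of a positive integer, α+β+γ < 1, and 0 ≤ α1, β1 ≤ 1. -/
/-!
At `J = 0`, `u₁` and `u₅` say `B = 0 ∨ β₁ = 0` and `A = 0 ∨ α₁ = 0`. Since `α, α₁ ≥ 0`, either
alternative gives `0 ≤ α₁ ≤ α` and `A ≤ 0` (likewise for `β`), so `γ < 1 - α - β ≤ γ₁` and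
`A + B + C = γ₁² - γ² > 0`, hence also `C > 0`. The remaining conditions `u₂, u₃, u₄` are linear
in `(A, B, C)`, and in each of the four cases they force `A + B + C = 0` or `α₁ + β₁ = 1`;
both contradict these inequalities.
-/

/-- `u₂ = u₃ = u₄ = 0` at `J = 0`, divided by `-4`. -/
def LinearConditions (α₁ β₁ A B C : ℝ) : Prop :=
  (1 - α₁) * (1 - 6 * β₁) * B + (1/2) * (1 - 2 * β₁) * (1 - 3 * β₁) * C = 0 ∧
  (2 - 3 * β₁) * (1 - β₁) * A + (2 - 3 * α₁) * (1 - α₁) * B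
    + (1/2) * ((2 - 3 * β₁) * (1 - 2 * α₁) + (2 - 3 * α₁) * (1 - 2 * β₁)) * C = 0 ∧
  (1 - β₁) * (1 - 6 * α₁) * A + (1/2) * (1 - 2 * α₁) * (1 - 3 * α₁) * C = 0

namespace LinearConditions

variable {α₁ β₁ A B C : ℝ}

theorem swap (h : LinearConditions α₁ β₁ A B C) : LinearConditions β₁ α₁ B A C :=
  ⟨h.2.2, by linear_combination h.2.1, h.1⟩

theorem add_add_eq_zero_of_α₁_β₁_eq_zero (h : LinearConditions 0 0 A B C) : A + B + C = 0 := by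
  linear_combination h.1 + h.2.2

theorem add_eq_zero_of_A_eq_zero_of_β₁_eq_zero (h : LinearConditions α₁ 0 0 B C) (hC : C ≠ 0) :
    B + C = 0 := by
  obtain ⟨h₂, h₃, -⟩ := h
  have hα₁ : α₁ = 1/2 := by
    have : (1 - 2 * α₁) * C = 0 := by linear_combination h₃ - (2 - 3 * α₁) * h₂
    linarith [(mul_eq_zero.1 this).resolve_right hC]
  subst hα₁
  linear_combination 2 * h₂

theorem add_eq_one_of_A_eq_zero_of_B_eq_zero (h : LinearConditions α₁ β₁ 0 0 C) (hC : C ≠ 0) :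
    α₁ + β₁ = 1 := by
  obtain ⟨h₂, h₃, h₄⟩ := h
  have root : ∀ x : ℝ, (1 - 2 * x) * (1 - 3 * x) * C = 0 → x = 1/2 ∨ x = 1/3 := by
    intro x hx
    rcases mul_eq_zero.1 ((mul_eq_zero.1 hx).resolve_right hC) with h | h
    · exact Or.inl (by linarith)
    · exact Or.inr (by linarith)
  rcases root α₁ (by linear_combination 2 * h₄) with rfl | rfl <;>
    rcases root β₁ (by linear_combination 2 * h₂) with rfl | rfl <;>
    norm_num at h₃ ⊢ <;> exact hC h₃

theorem add_add_eq_zero_or_add_eq_one (h : LinearConditions α₁ β₁ A B C)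
    (hA : A = 0 ∨ α₁ = 0) (hB : B = 0 ∨ β₁ = 0) (hC : C ≠ 0) :
    A + B + C = 0 ∨ α₁ + β₁ = 1 := by
  rcases hA with rfl | rfl <;> rcases hB with rfl | rfl
  · exact Or.inr (h.add_eq_one_of_A_eq_zero_of_B_eq_zero hC)
  · exact Or.inl (by linear_combination h.add_eq_zero_of_A_eq_zero_of_β₁_eq_zero hC)
  · exact Or.inl (by linear_combination h.swap.add_eq_zero_of_A_eq_zero_of_β₁_eq_zero hC)
  · exact Or.inl h.add_add_eq_zero_of_α₁_β₁_eq_zero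

end LinearConditions

theorem no_solution_J_zero (α β γ α1 β1 γ1 J A B C : ℝ)
    (hJ : J = 0)
    (hγ1 : γ1 = 1 - α1 - β1)
    (hA : A = α1 ^ 2 - α ^ 2) (hB : B = β1 ^ 2 - β ^ 2)
    (hC : C = γ1 ^ 2 - A - B - γ ^ 2)
    (hu1 : J * B ^ 2 - 12 * B * β1 ^ 2 = 0)
    (hu2 : 2 * J * B * C - 4 * ((1 - α1) * (1 - 6 * β1) * B
        + (1/2) * (1 - 2 * β1) * (1 - 3 * β1) * C) = 0)
    (hu3 : J * (2 * A * B + C ^ 2) - 4 * ((2 - 3 * β1) * (1 - β1) * A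
        + (2 - 3 * α1) * (1 - α1) * B
        + (1/2) * ((2 - 3 * β1) * (1 - 2 * α1) + (2 - 3 * α1) * (1 - 2 * β1)) * C) = 0)
    (hu4 : 2 * J * A * C - 4 * ((1 - β1) * (1 - 6 * α1) * A
        + (1/2) * (1 - 2 * α1) * (1 - 3 * α1) * C) = 0)
    (hu5 : J * A ^ 2 - 12 * A * α1 ^ 2 = 0)
    (hα : α = 0 ∨ ∃ n : ℕ, 1 ≤ n ∧ α = 1 / n)
    (hβ : β = 0 ∨ ∃ n : ℕ, 1 ≤ n ∧ β = 1 / n)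
    (hγ : γ = 0 ∨ ∃ n : ℕ, 1 ≤ n ∧ γ = 1 / n)
    (hsum : α + β + γ < 1)
    (hα1 : 0 ≤ α1 ∧ α1 ≤ 1) (hβ1 : 0 ≤ β1 ∧ β1 ≤ 1) :
    False := by
  subst hJ
  have hα0 : 0 ≤ α := by rcases hα with rfl | ⟨n, -, rfl⟩ <;> positivity
  have hβ0 : 0 ≤ β := by rcases hβ with rfl | ⟨n, -, rfl⟩ <;> positivity
  have hγ0 : 0 ≤ γ := by rcases hγ with rfl | ⟨n, -, rfl⟩ <;> positivity
  have hA0 : A = 0 ∨ α1 = 0 := by simpa using hu5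
  have hB0 : B = 0 ∨ β1 = 0 := by simpa using hu1
  have hA_nonpos : A ≤ 0 := by rcases hA0 with h | rfl <;> nlinarith
  have hB_nonpos : B ≤ 0 := by rcases hB0 with h | rfl <;> nlinarith
  have hα1α : α1 ≤ α := (sq_le_sq₀ hα1.1 hα0).1 (by linarith)
  have hβ1β : β1 ≤ β := (sq_le_sq₀ hβ1.1 hβ0).1 (by linarith)
  have hγγ1 : γ ^ 2 < γ1 ^ 2 := pow_lt_pow_left₀ (by linarith) hγ0 two_ne_zero
  have hlin : LinearConditions α1 β1 A B C :=
    ⟨by linear_combination -hu2 / 4, by linear_combination -hu3 / 4,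
      by linear_combination -hu4 / 4⟩
  rcases hlin.add_add_eq_zero_or_add_eq_one hA0 hB0 (by linarith) with h | h <;> linarith
end

section
/- Suppose real numbers α, β, γ ≥ 0 with α + β + γ < 1, and real α1, β1 ∈ [0,1] with γ1 = 1 - α1 - β1 ∈ [0,1], satisfy the five algebraic conditions u1 = u2 = u3 = u4 = u5 = 0 with a constant J ≠ 12. Then α ≠ 0, β ≠ 0, and γ ≠ 0. -/
/-!
Summing the five conditions gives the identity `J S² = 12 γ₁² S` with `S = A + B + C`, and `u₅`
alone gives `J A² = 12 A α₁²`. Hence `α = 0` forces `A = α₁² = 0`, and then `u₄`, `u₃` force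
`C = B = 0`; `β = 0` is the mirror case; `γ = 0` forces `S = γ₁² = 0`, i.e. `α₁ + β₁ = 1`,
after which `u₂` and `u₄` become `(J B - 12 β₁²)(A + B) = (1 - 6 β₁)((1 + β₁) A + (1 - β₁) B)` and
its mirror image. If `A, B ≠ 0` then `u₁, u₅` make `J A = 12 α₁²` and `J B = 12 β₁²` positive, so
`α₁ = β₁ = 1/6`; if exactly one of them vanishes, these identities contradict each other.
In every case `A = B = C = 0`, so `α = α₁`, `β = β₁`, `γ = γ₁` and `α + β + γ = 1`.
-/

theorem eq_zero_of_mul_sq_eq_mul_sq {R : Type*} [CommRing R] [IsDomain R] {a b x : R}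
    (hab : a ≠ b) (h : a * x ^ 2 = b * x ^ 2) : x = 0 :=
  pow_eq_zero_iff two_ne_zero |>.mp ((mul_eq_mul_right_iff.mp h).resolve_left hab)

structure UConditions (J α1 β1 A B C : ℝ) : Prop where
  u1 : J * B ^ 2 = 12 * B * β1 ^ 2
  u2 : 2 * J * B * C = 4 * ((1 - α1) * (1 - 6 * β1) * B
        + (1/2) * (1 - 2 * β1) * (1 - 3 * β1) * C)
  u3 : J * (2 * A * B + C ^ 2) = 4 * ((2 - 3 * β1) * (1 - β1) * A
        + (2 - 3 * α1) * (1 - α1) * B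
        + (1/2) * ((2 - 3 * β1) * (1 - 2 * α1) + (2 - 3 * α1) * (1 - 2 * β1)) * C)
  u4 : 2 * J * A * C = 4 * ((1 - β1) * (1 - 6 * α1) * A
        + (1/2) * (1 - 2 * α1) * (1 - 3 * α1) * C)
  u5 : J * A ^ 2 = 12 * A * α1 ^ 2

namespace UConditions

variable {J α1 β1 A B C : ℝ}

theorem swap (h : UConditions J α1 β1 A B C) : UConditions J β1 α1 B A C :=
  ⟨h.u5, h.u4, by linear_combination h.u3, h.u2, h.u1⟩

theorem mul_add_sq_eq (h : UConditions J α1 β1 A B C) :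
    J * (A + B + C) ^ 2 = 12 * (1 - α1 - β1) ^ 2 * (A + B + C) := by
  linear_combination h.u1 + h.u2 + h.u3 + h.u4 + h.u5

theorem eq_zero_of_A_eq_sq (h : UConditions J α1 β1 A B C) (hJ : J ≠ 12) (hA : A = α1 ^ 2) :
    A = 0 ∧ B = 0 ∧ C = 0 := by
  have hA0 : A = 0 :=
    eq_zero_of_mul_sq_eq_mul_sq hJ (by linear_combination h.u5 - 12 * A * hA)
  have hα1 : α1 = 0 := pow_eq_zero_iff two_ne_zero |>.mp (hA.symm.trans hA0)
  subst hA0 hα1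
  have hC0 : C = 0 := by linear_combination (-1/2 : ℝ) * h.u4
  subst hC0
  exact ⟨rfl, by linear_combination (-1/8 : ℝ) * h.u3, rfl⟩

section SumOne

variable (hab : α1 + β1 = 1) (hC : C = -A - B)
include hab hC

theorem sub_mul_add_eq (h : UConditions J α1 β1 A B C) :
    (J * B - 12 * β1 ^ 2) * (A + B) = (1 - 6 * β1) * ((1 + β1) * A + (1 - β1) * B) := by
  obtain rfl : α1 = 1 - β1 := by linarith
  subst hC
  linear_combination (-1/2 : ℝ) * h.u2

theorem A_eq_zero_of_B_eq_zero (h : UConditions J α1 β1 A B C) (hB : B = 0) : A = 0 := by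
  by_contra hA
  have hA_id := h.swap.sub_mul_add_eq (by linarith) (by rw [hC]; ring)
  have hB_id := h.sub_mul_add_eq hab hC
  have hJA : J * A = 12 * α1 ^ 2 := mul_left_cancel₀ hA (by linear_combination h.u5)
  subst hB
  rw [hJA, sub_self, zero_mul] at hA_id
  have hα1' : (1 - 6 * α1) * (1 - α1) = 0 :=
    mul_right_cancel₀ hA (by linear_combination -hA_id)
  have hβ1' : -12 * β1 ^ 2 = (1 - 6 * β1) * (1 + β1) :=
    mul_right_cancel₀ hA (by linear_combination hB_id)
  -- with `α₁ = 1 - β₁` the two quadratics in `β₁` differ by the constant `1`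
  have : (1 : ℝ) = 0 := by linear_combination -hα1' - hβ1' - (1 - 6 * α1 + 6 * β1) * hab
  exact one_ne_zero this

theorem six_mul_eq_one (h : UConditions J α1 β1 A B C) (hα1 : 0 ≤ α1) (hβ1 : 0 ≤ β1)
    (hA : A ≠ 0) (hB : B ≠ 0) : 6 * β1 = 1 := by
  have hJA : J * A = 12 * α1 ^ 2 := mul_left_cancel₀ hA (by linear_combination h.u5)
  have hJB : J * B = 12 * β1 ^ 2 := mul_left_cancel₀ hB (by linear_combination h.u1)
  have hJ : J ≠ 0 := by
    rintro rfl
    simp only [zero_mul, zero_eq_mul, OfNat.ofNat_ne_zero, false_or,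
      pow_eq_zero_iff two_ne_zero] at hJA hJB
    linarith
  have hJA_pos : 0 < J * A := lt_of_le_of_ne (by rw [hJA]; positivity) (mul_ne_zero hJ hA).symm
  have hJB_pos : 0 < J * B := lt_of_le_of_ne (by rw [hJB]; positivity) (mul_ne_zero hJ hB).symm
  have hpos : 0 < J * ((1 + β1) * A + (1 - β1) * B) := by
    rw [show J * ((1 + β1) * A + (1 - β1) * B) = (1 + β1) * (J * A) + α1 * (J * B) by
      linear_combination -(J * B) * hab]
    positivity
  have h0 := h.sub_mul_add_eq hab hC
  rw [hJB, sub_self, zero_mul, eq_comm] at h0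
  linarith [(mul_eq_zero.mp h0).resolve_right (right_ne_zero_of_mul hpos.ne')]

theorem A_eq_zero_and_B_eq_zero (h : UConditions J α1 β1 A B C)
    (hα1 : 0 ≤ α1) (hβ1 : 0 ≤ β1) : A = 0 ∧ B = 0 := by
  have hba : β1 + α1 = 1 := by linarith
  have hC' : C = -B - A := by rw [hC]; ring
  by_cases hA : A = 0
  · exact ⟨hA, h.swap.A_eq_zero_of_B_eq_zero hba hC' hA⟩
  by_cases hB : B = 0
  · exact absurd (h.A_eq_zero_of_B_eq_zero hab hC hB) hA
  have := h.six_mul_eq_one hab hC hα1 hβ1 hA hB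
  have := h.swap.six_mul_eq_one hba hC' hβ1 hα1 hB hA
  linarith

end SumOne

theorem eq_zero_of_add_eq_sq (h : UConditions J α1 β1 A B C) (hJ : J ≠ 12)
    (hα1 : 0 ≤ α1) (hβ1 : 0 ≤ β1) (hS : A + B + C = (1 - α1 - β1) ^ 2) :
    A = 0 ∧ B = 0 ∧ C = 0 := by
  have hsum := h.mul_add_sq_eq
  rw [hS] at hsum
  have hsq : (1 - α1 - β1) ^ 2 = 0 :=
    eq_zero_of_mul_sq_eq_mul_sq hJ (by linear_combination hsum)
  have hγ1 : 1 - α1 - β1 = 0 := pow_eq_zero_iff two_ne_zero |>.mp hsq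
  obtain ⟨hA, hB⟩ :=
    h.A_eq_zero_and_B_eq_zero (by linarith) (by linear_combination hS + hsq) hα1 hβ1
  exact ⟨hA, hB, by linear_combination hS + hsq - hA - hB⟩

end UConditions

theorem abc_nonzero (α β γ α1 β1 γ1 J A B C : ℝ)
    (hJ : J ≠ 12)
    (hαpos : 0 ≤ α) (hβpos : 0 ≤ β) (hγpos : 0 ≤ γ) (hsum : α + β + γ < 1)
    (hα1 : 0 ≤ α1 ∧ α1 ≤ 1) (hβ1 : 0 ≤ β1 ∧ β1 ≤ 1) (hγ1mem : 0 ≤ γ1 ∧ γ1 ≤ 1)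
    (hγ1 : γ1 = 1 - α1 - β1)
    (hA : A = α1 ^ 2 - α ^ 2) (hB : B = β1 ^ 2 - β ^ 2)
    (hC : C = γ1 ^ 2 - A - B - γ ^ 2)
    (hu1 : J * B ^ 2 = 12 * B * β1 ^ 2)
    (hu2 : 2 * J * B * C = 4 * ((1 - α1) * (1 - 6 * β1) * B
        + (1/2) * (1 - 2 * β1) * (1 - 3 * β1) * C))
    (hu3 : J * (2 * A * B + C ^ 2) = 4 * ((2 - 3 * β1) * (1 - β1) * A
        + (2 - 3 * α1) * (1 - α1) * B
        + (1/2) * ((2 - 3 * β1) * (1 - 2 * α1) + (2 - 3 * α1) * (1 - 2 * β1)) * C))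
    (hu4 : 2 * J * A * C = 4 * ((1 - β1) * (1 - 6 * α1) * A
        + (1/2) * (1 - 2 * α1) * (1 - 3 * α1) * C))
    (hu5 : J * A ^ 2 = 12 * A * α1 ^ 2) :
    α ≠ 0 ∧ β ≠ 0 ∧ γ ≠ 0 := by
  have hu : UConditions J α1 β1 A B C := ⟨hu1, hu2, hu3, hu4, hu5⟩
  have hABC : ¬(A = 0 ∧ B = 0 ∧ C = 0) := by
    rintro ⟨rfl, rfl, rfl⟩
    have hα : α = α1 := (sq_eq_sq₀ hαpos hα1.1).mp (by linarith)
    have hβ : β = β1 := (sq_eq_sq₀ hβpos hβ1.1).mp (by linarith)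
    have hγ : γ = γ1 := (sq_eq_sq₀ hγpos hγ1mem.1).mp (by linarith)
    linarith
  refine ⟨?_, ?_, ?_⟩ <;> rintro rfl <;> apply hABC
  · exact hu.eq_zero_of_A_eq_sq hJ (by linear_combination hA)
  · obtain ⟨hB, hA, hC⟩ := hu.swap.eq_zero_of_A_eq_sq hJ (by linear_combination hB)
    exact ⟨hA, hB, hC⟩
  · exact hu.eq_zero_of_add_eq_sq hJ hα1.1 hβ1.1
      (by linear_combination hC + hγ1 * (γ1 + 1 - α1 - β1))
end

section
/- Under the hypotheses of the previous lemma (the five conditions hold with J ∉ {0, 12}, α, β, γ > 0, α+β+γ < 1, α1+β1+γ1 = 1 with α1, β1, γ1 ∈ [0,1]), none of α1, β1, γ1 equals 0 or 1. -/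
/-! If one of α1, β1, γ1 vanished, then J would vanish: for α1 = 0 condition u5 reads
J α⁴ = 0, for β1 = 0 condition u1 reads J β⁴ = 0, and for γ1 = 0 the sum u1 + ⋯ + u5 reads
J (A + B + C)² = J γ⁴ = 0, since its right-hand side vanishes once α1 + β1 = 1.
Because α1, β1, γ1 are nonnegative with sum 1, none of them can equal 1 either. -/

theorem ne_zero_of_mul_sq_sub_sq_sq_eq {J x a : ℝ} (hJ : J ≠ 0) (ha : a ≠ 0)
    (h : J * (x ^ 2 - a ^ 2) ^ 2 = 12 * (x ^ 2 - a ^ 2) * x ^ 2) : x ≠ 0 := by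
  rintro rfl
  have hJa : J * a ^ 4 = 0 := by linear_combination h
  simp [hJ, ha] at hJa

theorem alpha1_beta1_gamma1_interior_general (α β γ α1 β1 γ1 J A B C : ℝ)
    (hJ0 : J ≠ 0)
    (hαpos : 0 < α) (hβpos : 0 < β) (hγpos : 0 < γ)
    (hα1 : 0 ≤ α1 ∧ α1 ≤ 1) (hβ1 : 0 ≤ β1 ∧ β1 ≤ 1) (hγ1mem : 0 ≤ γ1 ∧ γ1 ≤ 1)
    (hγ1 : α1 + β1 + γ1 = 1)
    (hA : A = α1 ^ 2 - α ^ 2) (hB : B = β1 ^ 2 - β ^ 2)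
    (hC : C = γ1 ^ 2 - A - B - γ ^ 2)
    (hu1 : J * B ^ 2 = 12 * B * β1 ^ 2)
    (hu2 : 2 * J * B * C = 4 * ((1 - α1) * (1 - 6 * β1) * B
        + (1/2) * (1 - 2 * β1) * (1 - 3 * β1) * C))
    (hu3 : J * (2 * A * B + C ^ 2) = 4 * ((2 - 3 * β1) * (1 - β1) * A
        + (2 - 3 * α1) * (1 - α1) * B
        + (1/2) * ((2 - 3 * β1) * (1 - 2 * α1) + (2 - 3 * α1) * (1 - 2 * β1)) * C))
    (hu4 : 2 * J * A * C = 4 * ((1 - β1) * (1 - 6 * α1) * A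
        + (1/2) * (1 - 2 * α1) * (1 - 3 * α1) * C))
    (hu5 : J * A ^ 2 = 12 * A * α1 ^ 2) :
    α1 ≠ 0 ∧ α1 ≠ 1 ∧ β1 ≠ 0 ∧ β1 ≠ 1 ∧ γ1 ≠ 0 ∧ γ1 ≠ 1 := by
  have hα1_ne : α1 ≠ 0 := ne_zero_of_mul_sq_sub_sq_sq_eq hJ0 hαpos.ne' (hA ▸ hu5)
  have hβ1_ne : β1 ≠ 0 := ne_zero_of_mul_sq_sub_sq_sq_eq hJ0 hβpos.ne' (hB ▸ hu1)
  have hγ1_ne : γ1 ≠ 0 := by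
    rintro rfl
    have hABC : A + B + C = -γ ^ 2 := by rw [hC]; ring
    have hβ1_eq : β1 = 1 - α1 := by linarith
    subst hβ1_eq
    have hJγ : J * γ ^ 4 = 0 := by
      linear_combination hu1 + hu2 + hu3 + hu4 + hu5 - J * (A + B + C - γ ^ 2) * hABC
    simp [hJ0, hγpos.ne'] at hJγ
  refine ⟨hα1_ne, fun h => hβ1_ne ?_, hβ1_ne, fun h => hα1_ne ?_, hγ1_ne, fun h => hα1_ne ?_⟩
    <;> linarith [hα1.1, hβ1.1, hγ1mem.1]

theorem alpha1_beta1_gamma1_interior (α β γ α1 β1 γ1 J A B C : ℝ)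
    (hJ : J ≠ 12) (hJ0 : J ≠ 0)
    (hαpos : 0 < α) (hβpos : 0 < β) (hγpos : 0 < γ) (hsum : α + β + γ < 1)
    (hα1 : 0 ≤ α1 ∧ α1 ≤ 1) (hβ1 : 0 ≤ β1 ∧ β1 ≤ 1) (hγ1mem : 0 ≤ γ1 ∧ γ1 ≤ 1)
    (hγ1 : α1 + β1 + γ1 = 1)
    (hA : A = α1 ^ 2 - α ^ 2) (hB : B = β1 ^ 2 - β ^ 2)
    (hC : C = γ1 ^ 2 - A - B - γ ^ 2)
    (hu1 : J * B ^ 2 = 12 * B * β1 ^ 2)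
    (hu2 : 2 * J * B * C = 4 * ((1 - α1) * (1 - 6 * β1) * B
        + (1/2) * (1 - 2 * β1) * (1 - 3 * β1) * C))
    (hu3 : J * (2 * A * B + C ^ 2) = 4 * ((2 - 3 * β1) * (1 - β1) * A
        + (2 - 3 * α1) * (1 - α1) * B
        + (1/2) * ((2 - 3 * β1) * (1 - 2 * α1) + (2 - 3 * α1) * (1 - 2 * β1)) * C))
    (hu4 : 2 * J * A * C = 4 * ((1 - β1) * (1 - 6 * α1) * A
        + (1/2) * (1 - 2 * α1) * (1 - 3 * α1) * C))
    (hu5 : J * A ^ 2 = 12 * A * α1 ^ 2) :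
    α1 ≠ 0 ∧ α1 ≠ 1 ∧ β1 ≠ 0 ∧ β1 ≠ 1 ∧ γ1 ≠ 0 ∧ γ1 ≠ 1 :=
  alpha1_beta1_gamma1_interior_general α β γ α1 β1 γ1 J A B C hJ0 hαpos hβpos hγpos hα1 hβ1 hγ1mem
    hγ1 hA hB hC hu1 hu2 hu3 hu4 hu5
end

section
/- Let η, Ω be smooth functions with Ω = η' - η²/2, and define P̂ = (3/(πi))η, Q̂ = (18/π²)Ω, R̂ = (27i/π³)(Ω' - 2ηΩ). If η satisfies η''' - 6ηη'' + 9(η')² + (J-12)(η' - η²/2)² = 0, then the triple satisfies the Ramanujan-type system: (1/(2πi))P̂' = (P̂² - Q̂)/12, (1/(2πi))Q̂' = (P̂Q̂ - R̂)/3, (1/(2πi))R̂' = P̂R̂/2 - (J/24)Q̂². -/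
/-!
Writing `N := ∇Ω`, the triple `(η, Ω, N)` satisfies the normalized system
`η' = η²/2 + Ω`, `Ω' = 2ηΩ + N`, `N' = 3ηN - JΩ²`: the first two are the definitions of
`Ω` and `∇Ω`, and the third is the Chazy-type equation rewritten in terms of `η`, `Ω`, `N`.
The Ramanujan-type system is this normalized system after rescaling by the constants
`3/(πi)`, `18/π²`, `27i/π³`.
-/

open Complex

noncomputable def chazyOmega (η : ℂ → ℂ) (z : ℂ) : ℂ := deriv η z - η z ^ 2 / 2

noncomputable def chazyNablaOmega (η : ℂ → ℂ) (z : ℂ) : ℂ :=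
  deriv (chazyOmega η) z - 2 * η z * chazyOmega η z

section NormalizedSystem

variable {η : ℂ → ℂ}

theorem hasDerivAt_eq_sq_half_add_chazyOmega (hη : Differentiable ℂ η) (z : ℂ) :
    HasDerivAt η (η z ^ 2 / 2 + chazyOmega η z) z :=
  (hη z).hasDerivAt.congr_deriv (by rw [chazyOmega]; ring)

theorem hasDerivAt_chazyOmega (hη : Differentiable ℂ η) (z : ℂ) :
    HasDerivAt (chazyOmega η) (deriv^[2] η z - η z * deriv η z) z :=
  ((hη.deriv z).hasDerivAt.sub (((hη z).hasDerivAt.pow 2).div_const 2)).congr_deriv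
    (by simp only [Function.iterate_succ, Function.iterate_zero, Function.comp_apply,
      Function.id_comp]; push_cast; ring)

theorem hasDerivAt_chazyOmega_eq (hη : Differentiable ℂ η) (z : ℂ) :
    HasDerivAt (chazyOmega η) (2 * η z * chazyOmega η z + chazyNablaOmega η z) z :=
  (hasDerivAt_chazyOmega hη z).congr_deriv
    (by rw [chazyNablaOmega, (hasDerivAt_chazyOmega hη z).deriv]; ring)

theorem chazyNablaOmega_eq (hη : Differentiable ℂ η) :
    chazyNablaOmega η = fun z ↦ deriv^[2] η z - 3 * η z * deriv η z + η z ^ 3 := by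
  funext z
  rw [chazyNablaOmega, (hasDerivAt_chazyOmega hη z).deriv, chazyOmega]
  ring

theorem hasDerivAt_chazyNablaOmega (hη : Differentiable ℂ η) (z : ℂ) (J : ℂ)
    (hchazy : deriv^[3] η z - 6 * η z * deriv^[2] η z + 9 * (deriv η z) ^ 2
        + (J - 12) * (deriv η z - (η z) ^ 2 / 2) ^ 2 = 0) :
    HasDerivAt (chazyNablaOmega η)
      (3 * η z * chazyNablaOmega η z - J * chazyOmega η z ^ 2) z := by
  have hη₁ := (hη z).hasDerivAt
  have hη₂ := (hη.deriv z).hasDerivAt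
  have hη₃ := (hη.deriv.deriv z).hasDerivAt
  rw [chazyNablaOmega_eq hη]
  refine ((hη₃.sub ((hη₁.const_mul 3).mul hη₂)).add (hη₁.pow 3)).congr_deriv ?_
  simp only [Function.iterate_succ, Function.iterate_zero, Function.comp_apply,
    Function.id_comp, chazyOmega] at hchazy ⊢
  push_cast
  linear_combination hchazy

end NormalizedSystem

theorem ramanujan_system_of_normalized {η Ω N : ℂ → ℂ} {J z : ℂ}
    (hη : HasDerivAt η (η z ^ 2 / 2 + Ω z) z)
    (hΩ : HasDerivAt Ω (2 * η z * Ω z + N z) z)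
    (hN : HasDerivAt N (3 * η z * N z - J * Ω z ^ 2) z) :
    let P := fun z ↦ (3 / (Real.pi * I)) * η z
    let Q := fun z ↦ (18 / (Real.pi : ℂ) ^ 2) * Ω z
    let R := fun z ↦ (27 * I / (Real.pi : ℂ) ^ 3) * N z
    (1 / (2 * Real.pi * I)) * deriv P z = ((P z) ^ 2 - Q z) / 12 ∧
    (1 / (2 * Real.pi * I)) * deriv Q z = (P z * Q z - R z) / 3 ∧
    (1 / (2 * Real.pi * I)) * deriv R z = P z * R z / 2 - (J / 24) * (Q z) ^ 2 := by
  have hπ : (Real.pi : ℂ) ≠ 0 := ofReal_ne_zero.mpr Real.pi_ne_zero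
  simp only [(hη.const_mul _).deriv, (hΩ.const_mul _).deriv, (hN.const_mul _).deriv]
  refine ⟨?_, ?_, ?_⟩ <;> field_simp
  · linear_combination 72 * Ω z * I_sq
  · linear_combination 54 * N z * I_sq
  · ring

theorem ramanujan_type_system (η Ω : ℂ → ℂ) (J : ℂ)
    (hη : ContDiff ℂ ⊤ η)
    (hΩ : ∀ z, Ω z = deriv η z - (η z) ^ 2 / 2)
    (hchazy : ∀ z, deriv^[3] η z - 6 * η z * deriv^[2] η z + 9 * (deriv η z) ^ 2
        + (J - 12) * (deriv η z - (η z) ^ 2 / 2) ^ 2 = 0)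
    (P Q R : ℂ → ℂ)
    (hP : ∀ z, P z = (3 / (Real.pi * I)) * η z)
    (hQ : ∀ z, Q z = (18 / (Real.pi : ℂ) ^ 2) * Ω z)
    (hR : ∀ z, R z = (27 * I / (Real.pi : ℂ) ^ 3) * (deriv Ω z - 2 * η z * Ω z)) :
    (∀ z, (1 / (2 * Real.pi * I)) * deriv P z = ((P z) ^ 2 - Q z) / 12) ∧
    (∀ z, (1 / (2 * Real.pi * I)) * deriv Q z = (P z * Q z - R z) / 3) ∧
    (∀ z, (1 / (2 * Real.pi * I)) * deriv R z = P z * R z / 2 - (J / 24) * (Q z) ^ 2) := by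
  have hηd : Differentiable ℂ η := hη.differentiable (by simp)
  obtain rfl : Ω = chazyOmega η := funext hΩ
  obtain rfl : P = fun z ↦ (3 / (Real.pi * I)) * η z := funext hP
  obtain rfl : Q = fun z ↦ (18 / (Real.pi : ℂ) ^ 2) * chazyOmega η z := funext hQ
  obtain rfl : R = fun z ↦ (27 * I / (Real.pi : ℂ) ^ 3) * chazyNablaOmega η z := funext hR
  have key z := ramanujan_system_of_normalized (hasDerivAt_eq_sq_half_add_chazyOmega hηd z)
    (hasDerivAt_chazyOmega_eq hηd z) (hasDerivAt_chazyNablaOmega hηd z J (hchazy z))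
  exact ⟨fun z ↦ (key z).1, fun z ↦ (key z).2.1, fun z ↦ (key z).2.2⟩
end

section
/- Let y be a smooth function satisfying the Chazy XII equation y''' - 2yy'' + 3(y')² = K(6y' - y²)² with 108K = 12 - J. Then P̂ = y/(πi), Q̂ = -(6y' - y²)/(πi)², R̂ = (9y'' - 9yy' + y³)/(πi)³ satisfy the system (1/(2πi))P̂' = (P̂² - Q̂)/12, (1/(2πi))Q̂' = (P̂Q̂ - R̂)/3, (1/(2πi))R̂' = P̂R̂/2 - (J/24)Q̂². -/
open Complex

theorem chazy_xii_ramanujan_triple (y : ℂ → ℂ) (K J : ℂ)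
    (hy : ContDiff ℂ ⊤ y) (hKJ : 108 * K = 12 - J)
    (hchazy : ∀ z, deriv^[3] y z - 2 * y z * deriv^[2] y z + 3 * (deriv y z) ^ 2
        = K * (6 * deriv y z - (y z) ^ 2) ^ 2)
    (P Q R : ℂ → ℂ)
    (hP : ∀ z, P z = y z / (Real.pi * I))
    (hQ : ∀ z, Q z = -(6 * deriv y z - (y z) ^ 2) / (Real.pi * I) ^ 2)
    (hR : ∀ z, R z = (9 * deriv^[2] y z - 9 * y z * deriv y z + (y z) ^ 3)
        / (Real.pi * I) ^ 3) :
    (∀ z, (1 / (2 * Real.pi * I)) * deriv P z = ((P z) ^ 2 - Q z) / 12) ∧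
    (∀ z, (1 / (2 * Real.pi * I)) * deriv Q z = (P z * Q z - R z) / 3) ∧
    (∀ z, (1 / (2 * Real.pi * I)) * deriv R z = P z * R z / 2 - (J / 24) * (Q z) ^ 2) := by
  have hc : ((Real.pi : ℂ) * I) ≠ 0 :=
    mul_ne_zero (by exact_mod_cast Real.pi_ne_zero) I_ne_zero
  have hy' : ContDiff ℂ (⊤ : ℕ∞) y := hy.of_le le_top
  have hle : (1 : WithTop ℕ∞) ≤ ((⊤ : ℕ∞) : WithTop ℕ∞) := by
    exact_mod_cast le_top
  have hyd : Differentiable ℂ y := hy'.differentiable (zero_lt_one.trans_le hle).ne'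
  have hy1 : Differentiable ℂ (deriv y) :=
    (hy'.iterate_deriv 1).differentiable (zero_lt_one.trans_le hle).ne'
  have hy2 : Differentiable ℂ (deriv^[2] y) :=
    (hy'.iterate_deriv 2).differentiable (zero_lt_one.trans_le hle).ne'
  have h2 : deriv^[2] y = deriv (deriv y) := by
    rw [Function.iterate_succ', Function.iterate_one]; rfl
  have h3 : deriv^[3] y = deriv (deriv^[2] y) := by
    rw [Function.iterate_succ']; rfl
  have hPf : P = fun z => y z / (Real.pi * I) := funext hP
  have hQf : Q = fun z => -(6 * deriv y z - (y z) ^ 2) / (Real.pi * I) ^ 2 := funext hQ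
  have hRf : R = fun z => (9 * deriv^[2] y z - 9 * y z * deriv y z + (y z) ^ 3)
      / (Real.pi * I) ^ 3 := funext hR
  have hdP : ∀ z, deriv P z = deriv y z / (Real.pi * I) := by
    intro z
    rw [hPf]
    exact ((hyd z).hasDerivAt.div_const _).deriv
  have hdQ : ∀ z, deriv Q z
      = -(6 * deriv (deriv y) z - 2 * y z * deriv y z) / (Real.pi * I) ^ 2 := by
    intro z
    rw [hQf]
    have : HasDerivAt (fun z => -(6 * deriv y z - (y z) ^ 2) / (Real.pi * I) ^ 2)
        (-(6 * deriv (deriv y) z - 2 * y z * deriv y z) / (Real.pi * I) ^ 2) z := by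
      have hA : HasDerivAt (fun z => 6 * deriv y z - (y z) ^ 2)
          (6 * deriv (deriv y) z - 2 * y z * deriv y z) z := by
        have := ((hy1 z).hasDerivAt.const_mul (6:ℂ)).sub
          (((hyd z).hasDerivAt).pow 2)
        refine this.congr_deriv ?_
        ring
      exact hA.neg.div_const _
    exact this.deriv
  have hdR : ∀ z, deriv R z
      = (9 * deriv (deriv^[2] y) z - 9 * (deriv y z * deriv y z + y z * deriv (deriv y) z)
          + 3 * (y z) ^ 2 * deriv y z) / (Real.pi * I) ^ 3 := by
    intro z
    rw [hRf]
    have hA : HasDerivAt (fun z => 9 * deriv^[2] y z - 9 * y z * deriv y z + (y z) ^ 3)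
        (9 * deriv (deriv^[2] y) z - 9 * (deriv y z * deriv y z + y z * deriv (deriv y) z)
          + 3 * (y z) ^ 2 * deriv y z) z := by
      have hB := (((hy2 z).hasDerivAt.const_mul (9:ℂ)).sub
        (((hyd z).hasDerivAt.mul ((hy1 z).hasDerivAt)).const_mul (9:ℂ))).add
        ((hyd z).hasDerivAt.pow 3)
      refine (hB.congr_deriv ?_).congr_of_eventuallyEq (Filter.Eventually.of_forall fun w => ?_)
      · ring
      · simp only [Pi.add_apply, Pi.sub_apply, Pi.mul_apply, Pi.pow_apply]
        ring
    exact (hA.div_const _).deriv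
  refine ⟨fun z => ?_, fun z => ?_, fun z => ?_⟩
  · rw [hdP z, hP z, hQ z]
    ring
  · rw [hdQ z, hP z, hQ z, hR z, h2]
    ring
  · rw [hdR z, hP z, hQ z, hR z, h2]
    have hch := hchazy z
    rw [h3, h2] at hch
    linear_combination (9 / (2 * ((Real.pi : ℂ) * I) ^ 4)) * hch
      + ((6 * deriv y z - y z ^ 2) ^ 2 / (24 * ((Real.pi : ℂ) * I) ^ 4)) * hKJ
end

section
/- In a hyperbolic circular triangle OAB with vertex O at the origin, straight sides OA (on the positive real axis, of length x) and OB making angle πα at O, and third side an arc of a circle meeting OA at angle πβ and OB at angle πγ with α + β + γ < 1, the radius R of the circle centered at O orthogonal to all three sides satisfies R² = x² · [sin(π(1-α+β-γ)/2) sin(π(1-α+β+γ)/2)] / [sin(π(1-α-β+γ)/2) sin(π(1-α-β-γ)/2)]. -/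
/-!
Since `R² = x² + 2rx sin πβ`, substituting `r` reduces the claim to the product-to-sum identity
`cos ((a+b-c)/2) cos ((a+b+c)/2) + sin a sin b = cos ((a-b+c)/2) cos ((a-b-c)/2)`
at `(a, b, c) = π (α, β, γ)`, together with `sin (π (1 - t) / 2) = cos (π t / 2)`.
-/

open Real

theorem cos_half_sub_mul_cos_half_add (u v : ℝ) :
    cos ((u - v) / 2) * cos ((u + v) / 2) = (cos u + cos v) / 2 := by
  rw [cos_add_cos]
  ring_nf

theorem cos_mul_cos_add_sin_mul_sin (a b c : ℝ) :
    cos ((a + b - c) / 2) * cos ((a + b + c) / 2) + sin a * sin b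
      = cos ((a - b + c) / 2) * cos ((a - b - c) / 2) := by
  rw [cos_half_sub_mul_cos_half_add (a + b) c, mul_comm (cos ((a - b + c) / 2)),
    cos_half_sub_mul_cos_half_add (a - b) c, cos_add, cos_sub]
  ring

theorem cos_pi_mul_div_two_pos {t : ℝ} (h₀ : -1 < t) (h₁ : t < 1) : 0 < cos (π * t / 2) := by
  apply cos_pos_of_mem_Ioo
  constructor <;> nlinarith [pi_pos]

theorem orthogonal_circle_radius_general (α β γ x r R : ℝ)
    (hα : 0 < α) (hβ : 0 < β) (hγ : 0 < γ) (hsum : α + β + γ < 1)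
    (hr : r = x * Real.sin (π * α)
        / (2 * Real.cos (π * (α + β - γ) / 2) * Real.cos (π * (α + β + γ) / 2)))
    (hR : R ^ 2 = (x ^ 2 + r ^ 2 + 2 * r * x * Real.sin (π * β)) - r ^ 2) :
    R ^ 2 = x ^ 2 * (Real.sin (π * (1 - α + β - γ) / 2) * Real.sin (π * (1 - α + β + γ) / 2))
      / (Real.sin (π * (1 - α - β + γ) / 2) * Real.sin (π * (1 - α - β - γ) / 2)) := by
  have hcos_sub : 0 < cos (π * (α + β - γ) / 2) :=
    cos_pi_mul_div_two_pos (by linarith) (by linarith)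
  have hcos_add : 0 < cos (π * (α + β + γ) / 2) :=
    cos_pi_mul_div_two_pos (by linarith) (by linarith)
  have key := cos_mul_cos_add_sin_mul_sin (π * α) (π * β) (π * γ)
  simp only [← mul_add, ← mul_sub] at key
  have hR' : R ^ 2 = x ^ 2 * (cos (π * (α - β + γ) / 2) * cos (π * (α - β - γ) / 2))
      / (cos (π * (α + β - γ) / 2) * cos (π * (α + β + γ) / 2)) := by
    rw [hR, hr, ← key]
    field_simp
    ring
  rw [hR']
  simp only [← sin_pi_div_two_sub]
  ring_nf

theorem orthogonal_circle_radius (α β γ x r R : ℝ)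
    (hα : 0 < α) (hβ : 0 < β) (hγ : 0 < γ) (hsum : α + β + γ < 1) (hx : 0 < x)
    (hr : r = x * Real.sin (π * α)
        / (2 * Real.cos (π * (α + β - γ) / 2) * Real.cos (π * (α + β + γ) / 2)))
    (hR : R ^ 2 = (x ^ 2 + r ^ 2 + 2 * r * x * Real.sin (π * β)) - r ^ 2) :
    R ^ 2 = x ^ 2 * (Real.sin (π * (1 - α + β - γ) / 2) * Real.sin (π * (1 - α + β + γ) / 2))
      / (Real.sin (π * (1 - α - β + γ) / 2) * Real.sin (π * (1 - α - β - γ) / 2)) :=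
  orthogonal_circle_radius_general α β γ x r R hα hβ hγ hsum hr hR
end

section
/- For real α, β, γ and x > 0, setting r = x sin(πα) / (2 cos(π(α+β-γ)/2) cos(π(α+β+γ)/2)) (assuming the denominators are nonzero), the quantity x² + 2rx sin(πβ) equals x² · [sin(π(1-α+β-γ)/2) sin(π(1-α+β+γ)/2)] / [sin(π(1-α-β+γ)/2) sin(π(1-α-β-γ)/2)], provided the denominator sines are nonzero. -/
open Real

lemma key_trig (A B C : ℝ) :
    Real.cos (A + B - C) * Real.cos (A + B + C) + Real.sin (2 * A) * Real.sin (2 * B)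
      = Real.cos (A - B + C) * Real.cos (A - B - C) := by
  simp only [Real.sin_two_mul, Real.cos_add, Real.cos_sub, Real.sin_add, Real.sin_sub,
    show A + B - C = (A + B) - C by ring, show A - B + C = (A - B) + C by ring,
    show A - B - C = (A - B) - C by ring]
  linear_combination (-4 * Real.sin A * Real.cos A * Real.sin B * Real.cos B) *
    Real.sin_sq_add_cos_sq C

theorem radius_trig_identity (α β γ x r : ℝ) (hx : 0 < x)
    (h1 : Real.cos (π * (α + β - γ) / 2) ≠ 0)
    (h2 : Real.cos (π * (α + β + γ) / 2) ≠ 0)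
    (h3 : Real.sin (π * (1 - α - β + γ) / 2) ≠ 0)
    (h4 : Real.sin (π * (1 - α - β - γ) / 2) ≠ 0)
    (hr : r = x * Real.sin (π * α)
        / (2 * Real.cos (π * (α + β - γ) / 2) * Real.cos (π * (α + β + γ) / 2))) :
    x ^ 2 + 2 * r * x * Real.sin (π * β)
      = x ^ 2 * (Real.sin (π * (1 - α + β - γ) / 2) * Real.sin (π * (1 - α + β + γ) / 2))
      / (Real.sin (π * (1 - α - β + γ) / 2) * Real.sin (π * (1 - α - β - γ) / 2)) := by
  set A := π * α / 2 with hA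
  set B := π * β / 2 with hB
  set C := π * γ / 2 with hC
  have e1 : π * (α + β - γ) / 2 = A + B - C := by rw [hA, hB, hC]; ring
  have e2 : π * (α + β + γ) / 2 = A + B + C := by rw [hA, hB, hC]; ring
  have e3 : π * (1 - α - β + γ) / 2 = π / 2 - (A + B - C) := by rw [hA, hB, hC]; ring
  have e4 : π * (1 - α - β - γ) / 2 = π / 2 - (A + B + C) := by rw [hA, hB, hC]; ring
  have e5 : π * (1 - α + β - γ) / 2 = π / 2 - (A - B + C) := by rw [hA, hB, hC]; ring
  have e6 : π * (1 - α + β + γ) / 2 = π / 2 - (A - B - C) := by rw [hA, hB, hC]; ring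
  have eα : π * α = 2 * A := by rw [hA]; ring
  have eβ : π * β = 2 * B := by rw [hB]; ring
  rw [e1] at h1 hr
  rw [eα] at hr
  rw [e2] at h2 hr
  rw [e3, Real.sin_pi_div_two_sub] at h3
  rw [e4, Real.sin_pi_div_two_sub] at h4
  rw [e3, e4, e5, e6, eβ, Real.sin_pi_div_two_sub, Real.sin_pi_div_two_sub,
    Real.sin_pi_div_two_sub, Real.sin_pi_div_two_sub, hr]
  field_simp
  linear_combination key_trig A B C
end
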